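/- arXiv:2401.10121 — 4 statements merged into one kernel-verified Lean document; each statement's English description precedes it below -/
import Mathlib

section
/- Let f : ℝ^d → ℝ be differentiable, let x^0, x^1, …, x^p ∈ ℝ^d, and let f̃(x^0), …, f̃(x^p) ∈ ℝ be given values. Let m(x) = c + gᵀx + (1/2)xᵀHx be a quadratic polynomial with H symmetric satisfying m(x^i) = f̃(x^i) for every i = 0, 1, …, p. Then for every x ∈ ℝ^d and every i ∈ {1, …, p}, the following identity holds: (x^i − x^0)ᵀ(∇m(x) − ∇f(x)) + (1/2)(x^i − x)ᵀH(x^i − x) − (1/2)(x^0 − x)ᵀH(x^0 − x) = (f̃(x^i) − f(x^i)) − (f̃(x^0) − f(x^0)) − [f(x) + ∇f(x)ᵀ(x^i − x) − f(x^i)] + [f(x) + ∇f(x)ᵀ(x^0 − x) − f(x^0)]. -/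
noncomputable section

open scoped RealInnerProductSpace
open Matrix InnerProductSpace

/-!
A quadratic model `m(y) = c + ⟪g, y⟫ + ½⟪y, A y⟫` with `A` symmetric has gradient `g + A y` and
coincides with its own second-order Taylor expansion about any point `y`. Subtracting the
expansions at the interpolation points `x⁰` and `xⁱ` gives
`m(xⁱ) - m(x⁰) = ⟪xⁱ - x⁰, ∇m(y)⟫ + ½⟪xⁱ - y, A(xⁱ - y)⟫ - ½⟪x⁰ - y, A(x⁰ - y)⟫`; the
interpolation conditions replace `m(xⁱ), m(x⁰)` by the data, and the terms in `f` on the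
right-hand side of the identity add up to `-⟪xⁱ - x⁰, ∇f(y)⟫`.
-/

section QuadraticModel

variable {E : Type*} [NormedAddCommGroup E] [InnerProductSpace ℝ E]

def quadraticModel (c : ℝ) (g : E) (A : E →ₗ[ℝ] E) (y : E) : ℝ :=
  c + ⟪g, y⟫ + (1 / 2) * ⟪y, A y⟫

theorem quadraticModel_eq_taylor (c : ℝ) (g : E) {A : E →ₗ[ℝ] E} (hA : A.IsSymmetric)
    (y u : E) :
    quadraticModel c g A u =
      quadraticModel c g A y + ⟪u - y, g + A y⟫ + (1 / 2) * ⟪u - y, A (u - y)⟫ := by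
  have hAyu : ⟪y, A u⟫ = ⟪u, A y⟫ := by rw [← hA, real_inner_comm]
  simp only [quadraticModel, map_sub, inner_sub_left, inner_sub_right, inner_add_right,
    real_inner_comm g]
  linarith

theorem quadraticModel_sub_quadraticModel (c : ℝ) (g : E) {A : E →ₗ[ℝ] E}
    (hA : A.IsSymmetric) (y u w : E) :
    quadraticModel c g A u - quadraticModel c g A w =
      ⟪u - w, g + A y⟫ + (1 / 2) * ⟪u - y, A (u - y)⟫ - (1 / 2) * ⟪w - y, A (w - y)⟫ := by
  have hdiff : ⟪u - w, g + A y⟫ = ⟪u - y, g + A y⟫ - ⟪w - y, g + A y⟫ := by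
    rw [← inner_sub_left, sub_sub_sub_cancel_right]
  rw [quadraticModel_eq_taylor c g hA y u, quadraticModel_eq_taylor c g hA y w, hdiff]
  ring

theorem hasGradientAt_quadraticModel [CompleteSpace E] (c : ℝ) (g : E) {A : E →L[ℝ] E}
    (hA : (A : E →ₗ[ℝ] E).IsSymmetric) (y : E) :
    HasGradientAt (quadraticModel c g (A : E →ₗ[ℝ] E)) (g + A y) y := by
  have hlin : HasFDerivAt (fun t : E => ⟪g, t⟫) (innerSL ℝ g) y := (innerSL ℝ g).hasFDerivAt
  have hquad := (hasFDerivAt_id y).inner ℝ A.hasFDerivAt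
  rw [hasGradientAt_iff_hasFDerivAt]
  refine ((hlin.const_add c).add (hquad.const_mul (1 / 2 : ℝ))).congr_fderiv ?_
  ext v
  have hAyv : ⟪y, A v⟫ = ⟪A y, v⟫ := (hA y v).symm
  have hvAy : ⟪v, A y⟫ = ⟪A y, v⟫ := real_inner_comm _ _
  simp only [_root_.add_apply, _root_.smul_apply,
    ContinuousLinearMap.comp_apply, ContinuousLinearMap.prod_apply, ContinuousLinearMap.id_apply,
    fderivInnerCLM_apply, id_eq, innerSL_apply_apply, toDual_apply_apply, inner_add_left,
    smul_eq_mul]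
  linarith

end QuadraticModel

theorem quadratic_interpolation_identity_general
    {d p : ℕ}
    (f : EuclideanSpace ℝ (Fin d) → ℝ)
    (x : Fin (p + 1) → EuclideanSpace ℝ (Fin d))
    (ft : Fin (p + 1) → ℝ)
    (c : ℝ) (g : EuclideanSpace ℝ (Fin d)) (H : Matrix (Fin d) (Fin d) ℝ)
    (hH : H.IsSymm)
    (m : EuclideanSpace ℝ (Fin d) → ℝ)
    (hm : ∀ y : EuclideanSpace ℝ (Fin d),
      m y = c + ⟪g, y⟫ + (1 / 2) * ⟪y, Matrix.toEuclideanLin H y⟫)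
    (hinterp : ∀ i, m (x i) = ft i) :
    ∀ (y : EuclideanSpace ℝ (Fin d)) (i : Fin p),
      ⟪x i.succ - x 0, gradient m y - gradient f y⟫
        + (1 / 2) * ⟪x i.succ - y, Matrix.toEuclideanLin H (x i.succ - y)⟫
        - (1 / 2) * ⟪x 0 - y, Matrix.toEuclideanLin H (x 0 - y)⟫
      = (ft i.succ - f (x i.succ)) - (ft 0 - f (x 0))
        - (f y + ⟪gradient f y, x i.succ - y⟫ - f (x i.succ))
        + (f y + ⟪gradient f y, x 0 - y⟫ - f (x 0)) := by
  intro y i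
  have hA : (toEuclideanLin H).IsSymmetric :=
    isSymmetric_toEuclideanLin_iff.mpr (H.conjTranspose_eq_transpose_of_trivial.trans hH)
  have hm_eq : m = quadraticModel c g (toEuclideanLin H) := funext hm
  have hgrad : gradient m y = g + toEuclideanLin H y := by
    rw [hm_eq]
    exact (hasGradientAt_quadraticModel c g (A := (toEuclideanLin H).toContinuousLinearMap)
      hA y).gradient
  have hmodel := quadraticModel_sub_quadraticModel c g hA y (x i.succ) (x 0)
  have hf_terms : ⟪gradient f y, x i.succ - y⟫ - ⟪gradient f y, x 0 - y⟫ =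
      ⟪x i.succ - x 0, gradient f y⟫ := by
    rw [← inner_sub_right, sub_sub_sub_cancel_right, real_inner_comm]
  rw [← hm_eq, hinterp, hinterp] at hmodel
  rw [hgrad, inner_sub_right]
  linarith

/-- The key algebraic identity for quadratic models interpolating noisy
function values: for each `i`, the projection of the model-gradient error onto the
displacement `x^i − x^0` equals a difference of noise terms plus differences of first-order
Taylor remainders of `f`, corrected by quadratic terms in `H`. -/
theorem quadratic_interpolation_identity
    {d p : ℕ} (hp : 0 < p)
    (f : EuclideanSpace ℝ (Fin d) → ℝ)
    (hf : Differentiable ℝ f)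
    (x : Fin (p + 1) → EuclideanSpace ℝ (Fin d))
    (ft : Fin (p + 1) → ℝ)
    (c : ℝ) (g : EuclideanSpace ℝ (Fin d)) (H : Matrix (Fin d) (Fin d) ℝ)
    (hH : H.IsSymm)
    (m : EuclideanSpace ℝ (Fin d) → ℝ)
    (hm : ∀ y : EuclideanSpace ℝ (Fin d),
      m y = c + ⟪g, y⟫ + (1 / 2) * ⟪y, Matrix.toEuclideanLin H y⟫)
    (hinterp : ∀ i, m (x i) = ft i) :
    ∀ (y : EuclideanSpace ℝ (Fin d)) (i : Fin p),
      ⟪x i.succ - x 0, gradient m y - gradient f y⟫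
        + (1 / 2) * ⟪x i.succ - y, Matrix.toEuclideanLin H (x i.succ - y)⟫
        - (1 / 2) * ⟪x 0 - y, Matrix.toEuclideanLin H (x 0 - y)⟫
      = (ft i.succ - f (x i.succ)) - (ft 0 - f (x 0))
        - (f y + ⟪gradient f y, x i.succ - y⟫ - f (x i.succ))
        + (f y + ⟪gradient f y, x 0 - y⟫ - f (x 0)) :=
  quadratic_interpolation_identity_general f x ft c g H hH m hm hinterp

end
end

section
/- Suppose the set 𝒳 = {x^0, x^1, …, x^p} is poised in the minimum Frobenius norm sense, let Δ > 0 with 𝒳 ⊂ B(x^0, Δ), and let Λ > 0 be such that 𝒳 is Λ-poised in B(x^0, Δ) in the minimum Frobenius norm sense. Define L̂ = (1/Δ)[x^1 − x^0, x^2 − x^0, …, x^p − x^0]ᵀ ∈ ℝ^{p×d}, assume L̂ᵀL̂ is invertible, and set L̂† = (L̂ᵀL̂)^{-1}L̂ᵀ. Then ‖L̂†‖ ≤ √(p+1) Λ, where ‖·‖ is the operator 2-norm. -/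
/-!
Affine functions are reproduced by the MFN Lagrange polynomials: for affine data the minimum
Frobenius norm solution has zero quadratic part, and poisedness makes its linear part unique.
Given `w ≠ 0`, apply this to `z ↦ ⟪w, z - x⁰⟫ / Δ`, whose values on `𝒳` are `0` and the entries
of `L̂ w`, at the point `x⁰ + (Δ / ‖w‖) w` of the ball, where it equals `‖w‖`. Cauchy–Schwarz and
`|ℓᵢ| ≤ Λ` give `‖w‖ ≤ √(p+1) Λ ‖L̂ w‖`. For `w = L̂† z` this is the claim, because `L̂ L̂†` is an
orthogonal projection, so `‖L̂ L̂† z‖ ≤ ‖z‖`.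
-/

noncomputable section

open scoped RealInnerProductSpace
open Matrix

/-- Index type for the degree-two monomials `x_i x_j` with `i ≤ j`;
it has cardinality `d(d+1)/2`. -/
abbrev QIdx (d : ℕ) := {ij : Fin d × Fin d // ij.1 ≤ ij.2}

/-- The vector `μ(y) = (1, y_1, …, y_d)` of degree-zero and degree-one monomials. -/
def muVec {d : ℕ} (y : EuclideanSpace ℝ (Fin d)) : Fin (d + 1) → ℝ :=
  Fin.cons 1 fun j => y j

/-- The vector `ν(y)` of degree-two monomials `y_i y_j`, `i ≤ j`. -/
def nuVec {d : ℕ} (y : EuclideanSpace ℝ (Fin d)) : QIdx d → ℝ :=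
  fun ij => y ij.1.1 * y ij.1.2

/-- The matrix `M` with `M_{ij} = μ_i(x^j)`. -/
def Mmat {d p : ℕ} (x : Fin (p + 1) → EuclideanSpace ℝ (Fin d)) :
    Matrix (Fin (d + 1)) (Fin (p + 1)) ℝ :=
  Matrix.of fun i j => muVec (x j) i

/-- The matrix `N` with `N_{ij} = ν_i(x^j)`. -/
def Nmat {d p : ℕ} (x : Fin (p + 1) → EuclideanSpace ℝ (Fin d)) :
    Matrix (QIdx d) (Fin (p + 1)) ℝ :=
  Matrix.of fun i j => nuVec (x j) i

/-- The KKT matrix `W = [[NᵀN, Mᵀ], [M, 0]]`. -/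
def Wmat {d p : ℕ} (x : Fin (p + 1) → EuclideanSpace ℝ (Fin d)) :
    Matrix (Fin (p + 1) ⊕ Fin (d + 1)) (Fin (p + 1) ⊕ Fin (d + 1)) ℝ :=
  Matrix.fromBlocks ((Nmat x)ᵀ * Nmat x) (Mmat x)ᵀ (Mmat x) 0

/-- `𝒳` is poised in the minimum Frobenius norm sense: the KKT matrix `W` is nonsingular. -/
def MFNPoised {d p : ℕ} (x : Fin (p + 1) → EuclideanSpace ℝ (Fin d)) : Prop :=
  IsUnit (Wmat x).det

/-- The quadratic polynomial `m(y) = αᵀμ(y) + βᵀν(y)` with coefficients `(α, β)`. -/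
def modelFun {d : ℕ} (a : Fin (d + 1) → ℝ) (b : QIdx d → ℝ)
    (y : EuclideanSpace ℝ (Fin d)) : ℝ :=
  (∑ i, a i * muVec y i) + ∑ ij, b ij * nuVec y ij

/-- `(α, β)` solves the minimum Frobenius norm interpolation problem for the data `v`:
it satisfies the interpolation constraints `Mᵀα + Nᵀβ = v` and minimizes `(1/2)‖β‖²`
among all coefficient pairs satisfying the constraints. -/
def IsMFNSol {d p : ℕ} (x : Fin (p + 1) → EuclideanSpace ℝ (Fin d))
    (v : Fin (p + 1) → ℝ) (a : Fin (d + 1) → ℝ) (b : QIdx d → ℝ) : Prop :=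
  (Mmat x)ᵀ.mulVec a + (Nmat x)ᵀ.mulVec b = v ∧
    ∀ (a' : Fin (d + 1) → ℝ) (b' : QIdx d → ℝ),
      (Mmat x)ᵀ.mulVec a' + (Nmat x)ᵀ.mulVec b' = v →
      ∑ ij, (b ij) ^ 2 ≤ ∑ ij, (b' ij) ^ 2

/-- The operator 2-norm of a real matrix. -/
noncomputable def opNorm2 {ι κ : Type*} [Fintype ι] [Fintype κ] [DecidableEq κ]
    (M : Matrix ι κ ℝ) : ℝ :=
  ‖(Matrix.toEuclideanLin M).toContinuousLinearMap‖

theorem sum_mul_le_sqrt_card_mul {ι : Type*} [Fintype ι] (v g : ι → ℝ) {Λ : ℝ} (hΛ : 0 ≤ Λ)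
    (hg : ∀ j, |g j| ≤ Λ) :
    ∑ j, v j * g j ≤ √(Fintype.card ι) * Λ * √(∑ j, v j ^ 2) := by
  have hg2 : ∑ j, g j ^ 2 ≤ Fintype.card ι * Λ ^ 2 :=
    calc ∑ j, g j ^ 2 ≤ ∑ _j : ι, Λ ^ 2 :=
          Finset.sum_le_sum fun j _ => sq_le_sq' (abs_le.1 (hg j)).1 (abs_le.1 (hg j)).2
      _ = Fintype.card ι * Λ ^ 2 := by simp
  calc ∑ j, v j * g j ≤ √(∑ j, v j ^ 2) * √(∑ j, g j ^ 2) := Real.sum_mul_le_sqrt_mul_sqrt _ _ _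
    _ ≤ √(∑ j, v j ^ 2) * √(Fintype.card ι * Λ ^ 2) := by gcongr
    _ = √(Fintype.card ι) * Λ * √(∑ j, v j ^ 2) := by
      rw [Real.sqrt_mul (Nat.cast_nonneg _), Real.sqrt_sq hΛ]; ring

theorem norm_toEuclideanLin_pinv_le {m n : Type*} [Fintype m] [Fintype n] [DecidableEq m]
    [DecidableEq n] (A : Matrix m n ℝ) (hA : IsUnit (Aᵀ * A).det) (z : EuclideanSpace ℝ m) :
    ‖toEuclideanLin A (toEuclideanLin ((Aᵀ * A)⁻¹ * Aᵀ) z)‖ ≤ ‖z‖ := by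
  set T := toEuclideanLin A
  set u := T (toEuclideanLin ((Aᵀ * A)⁻¹ * Aᵀ) z)
  have hadj : T.adjoint u = T.adjoint z := by
    rw [← toEuclideanLin_conjTranspose_eq_adjoint, conjTranspose_eq_transpose_of_trivial]
    simp only [u, T, ← LinearMap.comp_apply, ← toLpLin_mul_same, ← Matrix.mul_assoc,
      mul_nonsing_inv _ hA, Matrix.one_mul]
  have hsq : ‖u‖ ^ 2 ≤ ‖z‖ * ‖u‖ := by
    calc ‖u‖ ^ 2 = ⟪T.adjoint u, toEuclideanLin ((Aᵀ * A)⁻¹ * Aᵀ) z⟫ := by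
          rw [LinearMap.adjoint_inner_left, real_inner_self_eq_norm_sq]
      _ = ⟪z, u⟫ := by rw [hadj, LinearMap.adjoint_inner_left]
      _ ≤ ‖z‖ * ‖u‖ := real_inner_le_norm _ _
  nlinarith [norm_nonneg u, norm_nonneg z]

section MFN

variable {d p : ℕ} {x : Fin (p + 1) → EuclideanSpace ℝ (Fin d)}

theorem transpose_Mmat_mulVec_apply (a : Fin (d + 1) → ℝ) (j : Fin (p + 1)) :
    ((Mmat x)ᵀ *ᵥ a) j = ∑ i, a i * muVec (x j) i := by
  simp only [mulVec, dotProduct, transpose_apply, Mmat, of_apply, mul_comm]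

theorem sum_cons_mul_muVec (c : ℝ) (u y : EuclideanSpace ℝ (Fin d)) :
    ∑ i, (Fin.cons c fun k => u k : Fin (d + 1) → ℝ) i * muVec y i = c + ⟪u, y⟫ := by
  simp [Fin.sum_univ_succ, muVec, PiLp.inner_apply, mul_comm]

theorem IsMFNSol.dotProduct_eq_zero {v : Fin (p + 1) → ℝ} {a : Fin (d + 1) → ℝ}
    {b : QIdx d → ℝ} (h : IsMFNSol x v a b) {a' : Fin (d + 1) → ℝ} {b' : QIdx d → ℝ}
    (hker : (Mmat x)ᵀ *ᵥ a' + (Nmat x)ᵀ *ᵥ b' = 0) : b ⬝ᵥ b' = 0 := by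
  have hquad : ∀ t : ℝ, 0 ≤ (b' ⬝ᵥ b') * (t * t) + 2 * (b ⬝ᵥ b') * t + 0 := by
    intro t
    have hfeas : (Mmat x)ᵀ *ᵥ (a + t • a') + (Nmat x)ᵀ *ᵥ (b + t • b') = v := by
      calc _ = ((Mmat x)ᵀ *ᵥ a + (Nmat x)ᵀ *ᵥ b) + t • ((Mmat x)ᵀ *ᵥ a' + (Nmat x)ᵀ *ᵥ b') := by
            simp only [mulVec_add, mulVec_smul]; module
        _ = v := by rw [h.1, hker, smul_zero, add_zero]
    have hexpand : ∑ ij, (b + t • b') ij ^ 2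
        = ∑ ij, b ij ^ 2 + ((b' ⬝ᵥ b') * (t * t) + 2 * (b ⬝ᵥ b') * t) := by
      simp only [dotProduct, Finset.sum_mul, Finset.mul_sum, ← Finset.sum_add_distrib]
      exact Finset.sum_congr rfl fun ij _ => by
        simp only [Pi.add_apply, Pi.smul_apply, smul_eq_mul]; ring
    linarith [h.2 _ _ hfeas]
  have hdisc := discrim_le_zero hquad
  rw [discrim] at hdisc
  nlinarith [sq_nonneg (b ⬝ᵥ b')]

theorem MFNPoised.injective_transpose_Mmat_mulVec (h : MFNPoised x) :
    Function.Injective (Mmat x)ᵀ.mulVec := by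
  intro α β hαβ
  have hW : Function.Injective (Wmat x).mulVec :=
    mulVec_injective_iff_isUnit.2 ((isUnit_iff_isUnit_det _).2 h)
  have hblock : ∀ γ, Wmat x *ᵥ Sum.elim 0 γ = Sum.elim ((Mmat x)ᵀ *ᵥ γ) 0 := by
    intro γ
    simp [Wmat, fromBlocks_mulVec, Sum.elim_comp_inl, Sum.elim_comp_inr]
  have hext := @hW (Sum.elim 0 α) (Sum.elim 0 β) (by simp only [hblock, hαβ])
  exact funext fun i => congrFun hext (Sum.inr i)

theorem sum_mul_modelFun {ι : Type*} [Fintype ι] (c : ι → ℝ) (α : ι → Fin (d + 1) → ℝ)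
    (β : ι → QIdx d → ℝ) (y : EuclideanSpace ℝ (Fin d)) :
    ∑ j, c j * modelFun (α j) (β j) y = modelFun (∑ j, c j • α j) (∑ j, c j • β j) y := by
  simp only [modelFun, Finset.sum_apply, Pi.smul_apply, smul_eq_mul, mul_add,
    Finset.sum_add_distrib, Finset.mul_sum, Finset.sum_mul, mul_assoc]
  rw [Finset.sum_comm, Finset.sum_comm (γ := QIdx d)]

theorem sum_transpose_Mmat_mulVec_mul_modelFun {la : Fin (p + 1) → Fin (d + 1) → ℝ}
    {lb : Fin (p + 1) → QIdx d → ℝ} (hpoised : MFNPoised x)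
    (hlagrange : ∀ j, IsMFNSol x (Pi.single j 1) (la j) (lb j))
    (a : Fin (d + 1) → ℝ) (y : EuclideanSpace ℝ (Fin d)) :
    ∑ j, ((Mmat x)ᵀ *ᵥ a) j * modelFun (la j) (lb j) y = ∑ i, a i * muVec y i := by
  rw [sum_mul_modelFun]
  set v := (Mmat x)ᵀ *ᵥ a
  set A := ∑ j, v j • la j
  set B := ∑ j, v j • lb j
  have hfeas : (Mmat x)ᵀ *ᵥ A + (Nmat x)ᵀ *ᵥ B = v := by
    simp only [A, B, mulVec_sum, mulVec_smul, ← Finset.sum_add_distrib, ← smul_add,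
      fun j => (hlagrange j).1, ← Pi.single_smul, smul_eq_mul, mul_one]
    exact Finset.univ_sum_single v
  have hB : B = 0 := by
    have hker : (Mmat x)ᵀ *ᵥ (A - a) + (Nmat x)ᵀ *ᵥ B = 0 := by
      rw [mulVec_sub, sub_add_eq_add_sub, hfeas, sub_self]
    refine dotProduct_self_eq_zero.1 ?_
    calc B ⬝ᵥ B = ∑ j, v j * (lb j ⬝ᵥ B) := by
          simp only [B, sum_dotProduct, smul_dotProduct, smul_eq_mul]
      _ = 0 := by simp [(hlagrange _).dotProduct_eq_zero hker]
  have hA : A = a := hpoised.injective_transpose_Mmat_mulVec (by simpa [hB] using hfeas)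
  rw [hA, hB]
  simp [modelFun]

theorem sum_affine_mul_modelFun {la : Fin (p + 1) → Fin (d + 1) → ℝ}
    {lb : Fin (p + 1) → QIdx d → ℝ} (hpoised : MFNPoised x)
    (hlagrange : ∀ j, IsMFNSol x (Pi.single j 1) (la j) (lb j))
    (c : ℝ) (u y : EuclideanSpace ℝ (Fin d)) :
    ∑ j, (c + ⟪u, x j⟫) * modelFun (la j) (lb j) y = c + ⟪u, y⟫ := by
  simpa [transpose_Mmat_mulVec_apply, sum_cons_mul_muVec] using
    sum_transpose_Mmat_mulVec_mul_modelFun hpoised hlagrange (Fin.cons c fun k => u k) y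

end MFN

theorem norm_le_mul_norm_toEuclideanLin_of_lambdaPoised {d p : ℕ}
    {x : Fin (p + 1) → EuclideanSpace ℝ (Fin d)} (hpoised : MFNPoised x) {Δ Λ : ℝ} (hΔ : 0 < Δ)
    (hΛ : 0 ≤ Λ) {la : Fin (p + 1) → Fin (d + 1) → ℝ} {lb : Fin (p + 1) → QIdx d → ℝ}
    (hlagrange : ∀ i, IsMFNSol x (Pi.single i 1) (la i) (lb i))
    (hlampoised : ∀ i, ∀ y ∈ Metric.closedBall (x 0) Δ, |modelFun (la i) (lb i) y| ≤ Λ)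
    {Lhat : Matrix (Fin p) (Fin d) ℝ} (hLhat : ∀ i j, Lhat i j = (x i.succ j - x 0 j) / Δ)
    (w : EuclideanSpace ℝ (Fin d)) :
    ‖w‖ ≤ √(p + 1) * Λ * ‖toEuclideanLin Lhat w‖ := by
  rcases eq_or_ne w 0 with rfl | hw
  · simp
  set u := Δ⁻¹ • w
  set y := x 0 + (Δ / ‖w‖) • w
  have hy : y ∈ Metric.closedBall (x 0) Δ := by
    simp [y, norm_smul, abs_of_pos hΔ, hw]
  have hval : ⟪u, y - x 0⟫ = ‖w‖ := by
    simp only [u, y, add_sub_cancel_left, real_inner_smul_left, real_inner_smul_right,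
      real_inner_self_eq_norm_sq]
    field_simp
  have hcoef : ∀ i : Fin p, ⟪u, x i.succ - x 0⟫ = (Lhat *ᵥ w.ofLp) i := fun i => by
    simp only [u, PiLp.inner_apply, mulVec, dotProduct, hLhat]
    exact Finset.sum_congr rfl fun k _ => by simp; ring
  calc ‖w‖ = ⟪u, y - x 0⟫ := hval.symm
    _ = ∑ j, ⟪u, x j - x 0⟫ * modelFun (la j) (lb j) y := by
        simpa [inner_sub_right, ← sub_eq_neg_add] using
          (sum_affine_mul_modelFun hpoised hlagrange (-⟪u, x 0⟫) u y).symm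
    _ ≤ √(p + 1) * Λ * √(∑ j, ⟪u, x j - x 0⟫ ^ 2) := by
        simpa using sum_mul_le_sqrt_card_mul _ _ hΛ fun j => hlampoised j y hy
    _ = √(p + 1) * Λ * ‖toEuclideanLin Lhat w‖ := by
        simp [Fin.sum_univ_succ, hcoef, EuclideanSpace.norm_eq]

theorem pinv_bound_of_lambda_poised_general
    {d p : ℕ}
    (x : Fin (p + 1) → EuclideanSpace ℝ (Fin d))
    (hpoised : MFNPoised x)
    (Δ : ℝ) (hΔ : 0 < Δ)
    (Λ : ℝ) (hΛ : 0 < Λ)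
    (la : Fin (p + 1) → Fin (d + 1) → ℝ) (lb : Fin (p + 1) → QIdx d → ℝ)
    (hlagrange : ∀ i, IsMFNSol x (Pi.single i 1) (la i) (lb i))
    (hlampoised : ∀ i, ∀ y ∈ Metric.closedBall (x 0) Δ, |modelFun (la i) (lb i) y| ≤ Λ)
    (Lhat : Matrix (Fin p) (Fin d) ℝ)
    (hLhat : ∀ (i : Fin p) (j : Fin d), Lhat i j = (x i.succ j - x 0 j) / Δ)
    (hinv : IsUnit (Lhatᵀ * Lhat).det)
    (Lpinv : Matrix (Fin d) (Fin p) ℝ)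
    (hLpinv : Lpinv = (Lhatᵀ * Lhat)⁻¹ * Lhatᵀ) :
    opNorm2 Lpinv ≤ Real.sqrt (p + 1) * Λ := by
  refine ContinuousLinearMap.opNorm_le_bound _ (by positivity) fun z => ?_
  calc ‖toEuclideanLin Lpinv z‖
      ≤ √(p + 1) * Λ * ‖toEuclideanLin Lhat (toEuclideanLin Lpinv z)‖ :=
        norm_le_mul_norm_toEuclideanLin_of_lambdaPoised hpoised hΔ hΛ.le hlagrange hlampoised
          hLhat _
    _ ≤ √(p + 1) * Λ * ‖z‖ := by
        rw [hLpinv]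
        gcongr
        exact norm_toEuclideanLin_pinv_le Lhat hinv z

/-- If `𝒳` is `Λ`-poised in `B(x^0, Δ)` in the minimum Frobenius norm sense,
then the pseudoinverse of the scaled displacement matrix satisfies `‖L̂†‖ ≤ √(p+1) Λ`. -/
theorem pinv_bound_of_lambda_poised
    {d p : ℕ} (hd : 1 ≤ d) (hdp : d ≤ p) (hcard : p + 1 ≤ (d + 1) * (d + 2) / 2)
    (x : Fin (p + 1) → EuclideanSpace ℝ (Fin d))
    (hxinj : Function.Injective x)
    (hpoised : MFNPoised x)
    (Δ : ℝ) (hΔ : 0 < Δ)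
    (hx : ∀ i, x i ∈ Metric.closedBall (x 0) Δ)
    (Λ : ℝ) (hΛ : 0 < Λ)
    (la : Fin (p + 1) → Fin (d + 1) → ℝ) (lb : Fin (p + 1) → QIdx d → ℝ)
    (hlagrange : ∀ i, IsMFNSol x (Pi.single i 1) (la i) (lb i))
    (hlampoised : ∀ i, ∀ y ∈ Metric.closedBall (x 0) Δ, |modelFun (la i) (lb i) y| ≤ Λ)
    (Lhat : Matrix (Fin p) (Fin d) ℝ)
    (hLhat : ∀ (i : Fin p) (j : Fin d), Lhat i j = (x i.succ j - x 0 j) / Δ)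
    (hinv : IsUnit (Lhatᵀ * Lhat).det)
    (Lpinv : Matrix (Fin d) (Fin p) ℝ)
    (hLpinv : Lpinv = (Lhatᵀ * Lhat)⁻¹ * Lhatᵀ) :
    opNorm2 Lpinv ≤ Real.sqrt (p + 1) * Λ :=
  pinv_bound_of_lambda_poised_general x hpoised Δ hΔ Λ hΛ la lb hlagrange hlampoised Lhat hLhat hinv
    Lpinv hLpinv

end
end

section
/- Let p ∈ ℕ, Λ > 0, L > 0, ε_f ≥ 0, r ≥ 2, A > 0, B > 0, Δ_max > 0 and 0 < Δ ≤ Δ_max, and assume L ≥ r ε_f. Define Δ̄ = max{Δ, √(r ε_f / L)} and ν(t) = min{1, 1/t, 1/t²}. Suppose real numbers E ≥ 0 and h ≥ 0 satisfy h ≤ A/ν(Δ̄) + B ε_f/(Δ̄² ν(Δ̄)) and E ≤ (p+1)Λ[(L + h)Δ̄ + 2ε_f/Δ̄]. Then E ≤ ε_g + κ_eg Δ, where κ_eg = (p+1)Λ(L + max{A, B ε_f}) and ε_g = (p+1)Λ · max{ (L + A)√(r ε_f / L) + (B + 2)√(L ε_f / r), A Δ_max³ + 2√(L ε_f / r) }.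 -/
set_option maxHeartbeats 1000000 in
/-- The deterministic arithmetic content of the first-order-oracle lemma
for deterministically bounded noise: if `E` satisfies the combined gradient-error bound
over the decoupled sampling radius `Δ̄ = max{Δ, √(r ε_f / L)}`, then
`E ≤ ε_g + κ_eg Δ` with the stated constants. -/
theorem noise_aware_gradient_error_decomposition
    (p : ℕ) (Λ L εf r A B Δmax Δ : ℝ)
    (hΛ : 0 < Λ) (hL : 0 < L) (hεf : 0 ≤ εf) (hr : 2 ≤ r)
    (hA : 0 < A) (hB : 0 < B) (hΔmax : 0 < Δmax)
    (hΔ : 0 < Δ) (hΔle : Δ ≤ Δmax)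
    (hLrεf : r * εf ≤ L)
    (Δbar : ℝ) (hΔbar : Δbar = max Δ (Real.sqrt (r * εf / L)))
    (ν : ℝ → ℝ) (hν : ∀ t, ν t = min (min 1 (1 / t)) (1 / t ^ 2))
    (E h : ℝ) (hE0 : 0 ≤ E) (hh0 : 0 ≤ h)
    (hh : h ≤ A / ν Δbar + B * εf / (Δbar ^ 2 * ν Δbar))
    (hE : E ≤ (p + 1) * Λ * ((L + h) * Δbar + 2 * εf / Δbar))
    (κeg εg : ℝ)
    (hκeg : κeg = (p + 1) * Λ * (L + max A (B * εf)))
    (hεg : εg = (p + 1) * Λ *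
      max ((L + A) * Real.sqrt (r * εf / L) + (B + 2) * Real.sqrt (L * εf / r))
          (A * Δmax ^ 3 + 2 * Real.sqrt (L * εf / r))) :
    E ≤ εg + κeg * Δ := by
  set s := Real.sqrt (r * εf / L) with hs
  set W := Real.sqrt (L * εf / r) with hW
  clear_value s W
  have hr0 : (0:ℝ) < r := by linarith
  have hs0 : 0 ≤ s := by rw [hs]; positivity
  have hW0 : 0 ≤ W := by rw [hW]; positivity
  have hΔbarpos : 0 < Δbar := by
    rw [hΔbar]; exact lt_of_lt_of_le hΔ (le_max_left _ _)
  have hsΔbar : s ≤ Δbar := by rw [hΔbar]; exact le_max_right _ _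
  have hΔΔbar : Δ ≤ Δbar := by rw [hΔbar]; exact le_max_left _ _
  have hsW : s * W = εf := by
    rw [hs, hW, ← Real.sqrt_mul (by positivity)]
    have : r * εf / L * (L * εf / r) = εf ^ 2 := by
      field_simp
    rw [this, Real.sqrt_sq hεf]
  have hεfΔbar : εf / Δbar ≤ W := by
    rw [div_le_iff₀ hΔbarpos]
    calc εf = s * W := hsW.symm
    _ ≤ Δbar * W := mul_le_mul_of_nonneg_right hsΔbar hW0
    _ = W * Δbar := mul_comm _ _
  have hs1 : s ≤ 1 := by
    rw [hs]
    have : r * εf / L ≤ 1 := by rw [div_le_one hL]; linarith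
    calc Real.sqrt (r * εf / L) ≤ Real.sqrt 1 := Real.sqrt_le_sqrt this
    _ = 1 := Real.sqrt_one
  have hP : (0:ℝ) < (p + 1) * Λ := by positivity
  have hεg1 : (p + 1) * Λ * ((L + A) * s + (B + 2) * W) ≤ εg := by
    rw [hεg]; exact mul_le_mul_of_nonneg_left (le_max_left _ _) hP.le
  have hεg2 : (p + 1) * Λ * (A * Δmax ^ 3 + 2 * W) ≤ εg := by
    rw [hεg]; exact mul_le_mul_of_nonneg_left (le_max_right _ _) hP.le
  have hκ1 : (p + 1) * Λ * (L + A) ≤ κeg := by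
    rw [hκeg]
    exact mul_le_mul_of_nonneg_left (by linarith [le_max_left A (B * εf)]) hP.le
  have hκ2 : (p + 1) * Λ * (L + B * εf) ≤ κeg := by
    rw [hκeg]
    exact mul_le_mul_of_nonneg_left (by linarith [le_max_right A (B * εf)]) hP.le
  rcases le_or_gt Δbar 1 with hc | hc
  · -- small radius: ν = 1
    have hν1 : ν Δbar = 1 := by
      rw [hν]
      have h1 : (1:ℝ) ≤ 1 / Δbar := by
        rw [le_div_iff₀ hΔbarpos]; linarith
      have h2 : (1:ℝ) ≤ 1 / Δbar ^ 2 := by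
        rw [le_div_iff₀ (by positivity)]; nlinarith
      rw [min_eq_left h1, min_eq_left h2]
    rw [hν1] at hh
    simp only [div_one, mul_one] at hh
    -- h ≤ A + B * εf / Δbar ^ 2
    have hhd : h * Δbar ≤ A * Δbar + B * W := by
      have h1 : B * εf / Δbar ^ 2 * Δbar = B * (εf / Δbar) := by
        field_simp
      have h2 : h * Δbar ≤ (A + B * εf / Δbar ^ 2) * Δbar :=
        mul_le_mul_of_nonneg_right hh hΔbarpos.le
      rw [add_mul, h1] at h2
      nlinarith
    have hbound : (L + h) * Δbar + 2 * εf / Δbar ≤ (L + A) * Δ + ((L + A) * s + (B + 2) * W) := by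
      have hΔbs : Δbar ≤ Δ + s := by rw [hΔbar]; exact max_le (by linarith) (by linarith)
      have f0 : (L + A) * Δbar ≤ (L + A) * (Δ + s) :=
        mul_le_mul_of_nonneg_left hΔbs (by linarith)
      have g1 : (L + h) * Δbar = L * Δbar + h * Δbar := by ring
      have g2 : (L + A) * Δbar = L * Δbar + A * Δbar := by ring
      have g3 : (L + A) * (Δ + s) = (L + A) * Δ + (L + A) * s := by ring
      have g4 : 2 * εf / Δbar = 2 * (εf / Δbar) := by ring
      linarith [hhd, hεfΔbar]
    calc E ≤ (p + 1) * Λ * ((L + h) * Δbar + 2 * εf / Δbar) := hE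
    _ ≤ (p + 1) * Λ * ((L + A) * Δ + ((L + A) * s + (B + 2) * W)) :=
        mul_le_mul_of_nonneg_left hbound hP.le
    _ = (p + 1) * Λ * ((L + A) * s + (B + 2) * W) + (p + 1) * Λ * (L + A) * Δ := by ring
    _ ≤ εg + κeg * Δ := by
        have := mul_le_mul_of_nonneg_right hκ1 hΔ.le
        linarith
  · -- large radius: ν = 1/Δbar², Δbar = Δ
    have hν2 : ν Δbar = 1 / Δbar ^ 2 := by
      rw [hν]
      apply min_eq_right
      apply le_min
      · rw [div_le_one (by positivity)]; nlinarith
      · rw [div_le_div_iff₀ (by positivity) hΔbarpos]; nlinarith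
    rw [hν2] at hh
    have e1 : A / (1 / Δbar ^ 2) = A * Δbar ^ 2 := by field_simp
    have e2 : B * εf / (Δbar ^ 2 * (1 / Δbar ^ 2)) = B * εf := by
      field_simp
    rw [e1, e2] at hh
    have hsΔ : s ≤ Δ := by
      by_contra hcon
      push_neg at hcon
      have : Δbar = s := by rw [hΔbar]; exact max_eq_right hcon.le
      linarith
    have hΔbarΔ : Δbar = Δ := by
      rw [hΔbar]; exact max_eq_left hsΔ
    subst hΔbarΔ
    have hΔcube : Δbar ^ 3 ≤ Δmax ^ 3 := pow_le_pow_left₀ hΔbarpos.le hΔle 3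
    have hbound : (L + h) * Δbar + 2 * εf / Δbar ≤
        (L + B * εf) * Δbar + (A * Δmax ^ 3 + 2 * W) := by
      have f0 : h * Δbar ≤ (A * Δbar ^ 2 + B * εf) * Δbar :=
        mul_le_mul_of_nonneg_right hh hΔbarpos.le
      have g0 : (A * Δbar ^ 2 + B * εf) * Δbar = A * Δbar ^ 3 + B * εf * Δbar := by ring
      have f1 : A * Δbar ^ 3 ≤ A * Δmax ^ 3 := mul_le_mul_of_nonneg_left hΔcube hA.le
      have g1 : (L + h) * Δbar = L * Δbar + h * Δbar := by ring
      have g2 : (L + B * εf) * Δbar = L * Δbar + B * εf * Δbar := by ring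
      have g4 : 2 * εf / Δbar = 2 * (εf / Δbar) := by ring
      linarith [hεfΔbar]
    calc E ≤ (p + 1) * Λ * ((L + h) * Δbar + 2 * εf / Δbar) := hE
    _ ≤ (p + 1) * Λ * ((L + B * εf) * Δbar + (A * Δmax ^ 3 + 2 * W)) :=
        mul_le_mul_of_nonneg_left hbound hP.le
    _ = (p + 1) * Λ * (A * Δmax ^ 3 + 2 * W) + (p + 1) * Λ * (L + B * εf) * Δbar := by ring
    _ ≤ εg + κeg * Δbar := by
        have := mul_le_mul_of_nonneg_right hκ2 hΔbarpos.le
        linarith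
end

section
/- Let f : ℝ^d → ℝ be continuously differentiable with ∇f Lipschitz continuous with constant L > 0. Let ε_f ≥ 0, r ≥ 2 with L ≥ r ε_f, Δ_max > 0, 0 < Δ ≤ Δ_max, and θ ∈ ℝ^d. Define the sampling radius Δ̄ = max{Δ, √(r ε_f / L)}. Let 𝒳 = {x^0 = θ, x^1, …, x^p} ⊂ B(θ, Δ̄) be poised in the minimum Frobenius norm sense and Λ̄-poised in B(θ, Δ̄) in the minimum Frobenius norm sense for some Λ̄ > 0. Let f̃(x^0), …, f̃(x^p) ∈ ℝ satisfy |f̃(x^i) − f(x^i)| ≤ ε_f for every i, and let m be the MFN interpolation model with data (f̃(x^0), …, f̃(x^p)). Set A = 4(p+1)Λ̄ L √((d+1)(d+2)) and B = 8(p+1)Λ̄ √((d+1)(d+2)). Then the model gradient g = ∇m(θ) satisfies ‖∇f(θ) − g‖ ≤ ε_g + κ_eg Δ, where κ_eg = (p+1)Λ̄ (L + max{A, B ε_f}) and ε_g = (p+1)Λ̄ · max{ (L + A)√(r ε_f / L) + (B + 2)√(L ε_f / r), A Δ_max³ + 2√(L ε_f / r) }. -/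
noncomputable section

open scoped RealInnerProductSpace
open Matrix

/-!
Let `q y = f θ + ⟪∇f θ, y - θ⟫`. MFN interpolation is linear in the data and reproduces affine
functions, so the model is `m = q + ∑ᵢ (f̃ xⁱ - q xⁱ) ℓᵢ`. Each residual is at most `ε_f + L Δ̄²`
(noise plus Taylor error), hence `|m - q| ≤ (p + 1) (ε_f + L Δ̄²) Λ̄` on `B(θ, Δ̄)`. For a quadratic
`m`, `m (θ + h) - m (θ - h) = 2 ⟪∇m θ, h⟫`, which turns this bound into
`‖∇m θ - ∇f θ‖ ≤ (p + 1) Λ̄ (ε_f / Δ̄ + L Δ̄)`; since `√(r ε_f / L) ≤ Δ̄ ≤ Δ + √(r ε_f / L)`,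
this is at most `(p + 1) Λ̄ (L √(r ε_f / L) + √(L ε_f / r) + L Δ)`.
-/

open Finset

section InnerProductSpace

variable {E : Type*} [NormedAddCommGroup E] [InnerProductSpace ℝ E]

lemma norm_le_of_abs_inner_le {v : E} {R K : ℝ} (hR : 0 < R)
    (h : ∀ z ∈ Metric.closedBall (0 : E) R, |⟪v, z⟫| ≤ K) : ‖v‖ ≤ K / R := by
  rw [← innerSL_apply_norm ℝ v]
  exact (innerSL ℝ v).opNorm_bound_of_ball_bound hR K h

lemma abs_sub_sub_inner_gradient_le [CompleteSpace E] {f : E → ℝ} (hf : Differentiable ℝ f)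
    {L : ℝ} (hL : 0 ≤ L) {θ : E} (hlip : ∀ y, ‖gradient f y - gradient f θ‖ ≤ L * ‖y - θ‖)
    (u : E) : |f u - f θ - ⟪gradient f θ, u - θ⟫| ≤ L * ‖u - θ‖ ^ 2 := by
  have hfderiv (y : E) : fderiv ℝ f y = InnerProductSpace.toDual ℝ E (gradient f y) :=
    ((InnerProductSpace.toDual ℝ E).apply_symm_apply _).symm
  have hbound : ∀ y ∈ Metric.closedBall θ ‖u - θ‖,
      ‖fderiv ℝ f y - fderiv ℝ f θ‖ ≤ L * ‖u - θ‖ := fun y hy => by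
    rw [hfderiv, hfderiv, ← map_sub, LinearIsometryEquiv.norm_map]
    exact (hlip y).trans (mul_le_mul_of_nonneg_left (mem_closedBall_iff_norm.mp hy) hL)
  have := (convex_closedBall θ ‖u - θ‖).norm_image_sub_le_of_norm_fderiv_le'
    (fun y _ => hf y) hbound (Metric.mem_closedBall_self (norm_nonneg _))
    (mem_closedBall_iff_norm.mpr le_rfl)
  rw [hfderiv, InnerProductSpace.toDual_apply_apply, Real.norm_eq_abs] at this
  linarith

lemma abs_sub_taylor_le [CompleteSpace E] {f : E → ℝ} (hf : Differentiable ℝ f) {L : ℝ}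
    (hL : 0 ≤ L) {θ : E} (hlip : ∀ y, ‖gradient f y - gradient f θ‖ ≤ L * ‖y - θ‖) {u : E}
    {fu ε : ℝ} (hfu : |fu - f u| ≤ ε) :
    |fu - (f θ + ⟪gradient f θ, u - θ⟫)| ≤ ε + L * ‖u - θ‖ ^ 2 :=
  calc |fu - (f θ + ⟪gradient f θ, u - θ⟫)|
      ≤ |fu - f u| + |f u - f θ - ⟪gradient f θ, u - θ⟫| :=
        (congrArg abs (by ring)).trans_le (abs_add_le _ _)
    _ ≤ ε + L * ‖u - θ‖ ^ 2 := add_le_add hfu (abs_sub_sub_inner_gradient_le hf hL hlip u)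

end InnerProductSpace

section QuadraticModel

variable {d : ℕ}

lemma modelFun_eq_dotProduct (a : Fin (d + 1) → ℝ) (b : QIdx d → ℝ)
    (y : EuclideanSpace ℝ (Fin d)) : modelFun a b y = a ⬝ᵥ muVec y + b ⬝ᵥ nuVec y :=
  rfl

lemma modelFun_add (a a' : Fin (d + 1) → ℝ) (b b' : QIdx d → ℝ)
    (y : EuclideanSpace ℝ (Fin d)) :
    modelFun (a + a') (b + b') y = modelFun a b y + modelFun a' b' y := by
  simp only [modelFun_eq_dotProduct, add_dotProduct]
  ring

lemma modelFun_sum_smul {ι : Type*} [Fintype ι] (c : ι → ℝ) (a : ι → Fin (d + 1) → ℝ)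
    (b : ι → QIdx d → ℝ) (y : EuclideanSpace ℝ (Fin d)) :
    modelFun (∑ i, c i • a i) (∑ i, c i • b i) y = ∑ i, c i * modelFun (a i) (b i) y := by
  simp only [modelFun_eq_dotProduct, sum_dotProduct, smul_dotProduct, smul_eq_mul, mul_add,
    sum_add_distrib]

lemma exists_modelFun_eq_affine (c₀ : ℝ) (g θ : EuclideanSpace ℝ (Fin d)) :
    ∃ a, modelFun a 0 = fun y => c₀ + ⟪g, y - θ⟫ := by
  refine ⟨Fin.cons (c₀ - ⟪g, θ⟫) fun j => g j, funext fun y => ?_⟩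
  simp only [modelFun, muVec, Fin.sum_univ_succ, Fin.cons_zero, Fin.cons_succ, Pi.zero_apply,
    zero_mul, sum_const_zero, add_zero, mul_one, inner_sub_right, PiLp.inner_apply,
    RCLike.inner_apply, conj_trivial]
  simp only [mul_comm (y _)]
  ring

lemma hasFDerivAt_modelFun (a : Fin (d + 1) → ℝ) (b : QIdx d → ℝ)
    (y : EuclideanSpace ℝ (Fin d)) :
    HasFDerivAt (modelFun a b)
      (∑ j : Fin d, a j.succ • EuclideanSpace.proj (𝕜 := ℝ) j +
        ∑ ij : QIdx d, b ij • (y ij.1.1 • EuclideanSpace.proj (𝕜 := ℝ) ij.1.2 +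
          y ij.1.2 • EuclideanSpace.proj (𝕜 := ℝ) ij.1.1)) y := by
  have hproj (j : Fin d) := (EuclideanSpace.proj (𝕜 := ℝ) j).hasFDerivAt (x := y)
  have hm : modelFun a b = fun z => a 0 + (∑ j : Fin d, a j.succ * EuclideanSpace.proj j z +
      ∑ ij : QIdx d, b ij * (EuclideanSpace.proj ij.1.1 z * EuclideanSpace.proj ij.1.2 z)) := by
    funext z
    simp [modelFun, muVec, nuVec, Fin.sum_univ_succ, add_assoc]
  rw [hm]
  refine (((HasFDerivAt.fun_sum fun j _ => (hproj j).const_mul (a j.succ)).add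
    (HasFDerivAt.fun_sum fun ij _ =>
      ((hproj ij.1.1).mul (hproj ij.1.2)).const_mul (b ij))).const_add (a 0)).congr_fderiv ?_
  simp

lemma modelFun_add_sub_modelFun_sub (a : Fin (d + 1) → ℝ) (b : QIdx d → ℝ)
    (y h : EuclideanSpace ℝ (Fin d)) :
    modelFun a b (y + h) - modelFun a b (y - h) = 2 * ⟪gradient (modelFun a b) y, h⟫ := by
  rw [gradient, InnerProductSpace.toDual_symm_apply (𝕜 := ℝ), (hasFDerivAt_modelFun a b y).fderiv]
  simp only [modelFun, muVec, nuVec, Fin.sum_univ_succ, Fin.cons_zero, Fin.cons_succ,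
    _root_.add_apply, _root_.sum_apply, _root_.smul_apply,
    PiLp.proj_apply, PiLp.add_apply, PiLp.sub_apply, smul_eq_mul]
  have hlin : ∑ j, a j.succ * (y j + h j) - ∑ j, a j.succ * (y j - h j) =
      2 * ∑ j, a j.succ * h j := by
    rw [← sum_sub_distrib, mul_sum]
    exact sum_congr rfl fun _ _ => by ring
  have hquad : ∑ ij : QIdx d, b ij * ((y ij.1.1 + h ij.1.1) * (y ij.1.2 + h ij.1.2)) -
      ∑ ij : QIdx d, b ij * ((y ij.1.1 - h ij.1.1) * (y ij.1.2 - h ij.1.2)) =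
      2 * ∑ ij : QIdx d, b ij * (y ij.1.1 * h ij.1.2 + y ij.1.2 * h ij.1.1) := by
    rw [← sum_sub_distrib, mul_sum]
    exact sum_congr rfl fun _ _ => by ring
  linear_combination hlin + hquad

lemma norm_gradient_modelFun_sub_le {a : Fin (d + 1) → ℝ} {b : QIdx d → ℝ}
    {θ g : EuclideanSpace ℝ (Fin d)} {c₀ R K : ℝ} (hR : 0 < R)
    (h : ∀ y ∈ Metric.closedBall θ R, |modelFun a b y - (c₀ + ⟪g, y - θ⟫)| ≤ K) :
    ‖gradient (modelFun a b) θ - g‖ ≤ K / R := by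
  refine norm_le_of_abs_inner_le hR fun z hz => ?_
  have hz' : ‖z‖ ≤ R := mem_closedBall_zero_iff.mp hz
  have hplus := abs_le.mp (h (θ + z) (by simpa using hz'))
  have hminus := abs_le.mp (h (θ - z) (by simpa using hz'))
  have hsym := modelFun_add_sub_modelFun_sub a b θ z
  simp only [add_sub_cancel_left, sub_sub_cancel_left, inner_neg_right] at hplus hminus
  rw [inner_sub_left, abs_le]
  constructor <;> linarith [hplus.1, hplus.2, hminus.1, hminus.2]

end QuadraticModel

lemma sum_sq_eq_dotProduct {ι : Type*} [Fintype ι] (v : ι → ℝ) : ∑ i, v i ^ 2 = v ⬝ᵥ v := by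
  simp only [dotProduct, sq]

section MFN

variable {d p : ℕ} (x : Fin (p + 1) → EuclideanSpace ℝ (Fin d))

lemma mulVec_add_mulVec_apply (a : Fin (d + 1) → ℝ) (b : QIdx d → ℝ) (j : Fin (p + 1)) :
    ((Mmat x)ᵀ *ᵥ a + (Nmat x)ᵀ *ᵥ b) j = modelFun a b (x j) := by
  simp only [Pi.add_apply, mulVec, modelFun_eq_dotProduct, transpose_apply, Mmat, Nmat, of_apply,
    dotProduct_comm]

theorem isMFNSol_iff {v : Fin (p + 1) → ℝ} {a : Fin (d + 1) → ℝ} {b : QIdx d → ℝ} :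
    IsMFNSol x v a b ↔ (Mmat x)ᵀ *ᵥ a + (Nmat x)ᵀ *ᵥ b = v ∧
      ∀ a' b', (Mmat x)ᵀ *ᵥ a' + (Nmat x)ᵀ *ᵥ b' = 0 → b ⬝ᵥ b' = 0 := by
  simp only [IsMFNSol, sum_sq_eq_dotProduct]
  refine and_congr_right fun hab => ⟨fun hmin a' b' h0 => ?_, fun horth a' b' h => ?_⟩
  · set s := b ⬝ᵥ b'
    set n := b' ⬝ᵥ b'
    have hn : 0 ≤ n := dotProduct_self_star_nonneg b'
    -- optimality along the feasible direction `(a', b')`; the step `-s / (n + 1)`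
    -- avoids a case split on `n = 0`
    have := hmin (a + (-s / (n + 1)) • a') (b + (-s / (n + 1)) • b') (by
      rw [mulVec_add, mulVec_add, mulVec_smul, mulVec_smul, add_add_add_comm, ← smul_add, h0,
        smul_zero, add_zero, hab])
    simp only [dotProduct_add, add_dotProduct, dotProduct_smul, smul_dotProduct, smul_eq_mul,
      dotProduct_comm b' b] at this
    have : s ^ 2 * (n + 2) ≤ 0 := by
      field_simp at this
      nlinarith
    nlinarith [sq_nonneg s]
  · have h0 : (Mmat x)ᵀ *ᵥ (a' - a) + (Nmat x)ᵀ *ᵥ (b' - b) = 0 := by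
      rw [mulVec_sub, mulVec_sub, ← sub_eq_zero.mpr h, ← hab]
      abel
    have horth' := horth _ _ h0
    have hsq := dotProduct_self_star_nonneg (b' - b)
    simp only [dotProduct_sub, sub_dotProduct, star_trivial, dotProduct_comm b' b] at horth' hsq ⊢
    linarith

variable {x}

lemma isMFNSol_zero_right (a : Fin (d + 1) → ℝ) : IsMFNSol x ((Mmat x)ᵀ *ᵥ a) a 0 :=
  ⟨by rw [mulVec_zero, add_zero], fun _ b' _ => by
    simpa using sum_nonneg fun i _ => sq_nonneg (b' i)⟩

lemma IsMFNSol.add {v v' : Fin (p + 1) → ℝ} {a a' : Fin (d + 1) → ℝ} {b b' : QIdx d → ℝ}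
    (h : IsMFNSol x v a b) (h' : IsMFNSol x v' a' b') : IsMFNSol x (v + v') (a + a') (b + b') := by
  rw [isMFNSol_iff] at h h' ⊢
  refine ⟨?_, fun a'' b'' h0 => ?_⟩
  · rw [mulVec_add, mulVec_add, add_add_add_comm, h.1, h'.1]
  · rw [add_dotProduct, h.2 a'' b'' h0, h'.2 a'' b'' h0, add_zero]

lemma IsMFNSol.sum_smul {ι : Type*} [Fintype ι] {v : ι → Fin (p + 1) → ℝ}
    {a : ι → Fin (d + 1) → ℝ} {b : ι → QIdx d → ℝ} (h : ∀ i, IsMFNSol x (v i) (a i) (b i))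
    (c : ι → ℝ) : IsMFNSol x (∑ i, c i • v i) (∑ i, c i • a i) (∑ i, c i • b i) := by
  simp only [isMFNSol_iff] at h ⊢
  refine ⟨?_, fun a'' b'' h0 => ?_⟩
  · simp only [mulVec_sum, mulVec_smul, ← sum_add_distrib, ← smul_add, (h _).1]
  · simp only [sum_dotProduct, smul_dotProduct, (h _).2 a'' b'' h0, smul_zero, sum_const_zero]

theorem IsMFNSol.unique (hx : MFNPoised x) {v : Fin (p + 1) → ℝ} {a a' : Fin (d + 1) → ℝ}
    {b b' : QIdx d → ℝ} (h : IsMFNSol x v a b) (h' : IsMFNSol x v a' b') : a = a' ∧ b = b' := by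
  rw [isMFNSol_iff] at h h'
  have h0 : (Mmat x)ᵀ *ᵥ (a - a') + (Nmat x)ᵀ *ᵥ (b - b') = 0 := by
    rw [mulVec_sub, mulVec_sub, sub_add_sub_comm, h.1, h'.1, sub_self]
  have hb : b = b' := by
    rw [← sub_eq_zero, ← dotProduct_self_eq_zero, sub_dotProduct, h.2 _ _ h0, h'.2 _ _ h0,
      sub_zero]
  subst hb
  have hW : Wmat x *ᵥ Sum.elim 0 a = Wmat x *ᵥ Sum.elim 0 a' := by
    have hMa : (Mmat x)ᵀ *ᵥ a = (Mmat x)ᵀ *ᵥ a' := add_right_cancel (h.1.trans h'.1.symm)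
    simp [Wmat, fromBlocks_mulVec, hMa]
  have hinj := mulVec_injective_iff_isUnit.mpr ((isUnit_iff_isUnit_det _).mpr hx)
  exact ⟨congrArg (· ∘ Sum.inr) (hinj hW), rfl⟩

theorem IsMFNSol.modelFun_eq_add_sum_lagrange (hx : MFNPoised x)
    {la : Fin (p + 1) → Fin (d + 1) → ℝ} {lb : Fin (p + 1) → QIdx d → ℝ}
    (hl : ∀ i, IsMFNSol x (Pi.single i 1) (la i) (lb i))
    {v : Fin (p + 1) → ℝ} {a : Fin (d + 1) → ℝ} {b : QIdx d → ℝ} (h : IsMFNSol x v a b)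
    (aq : Fin (d + 1) → ℝ) (y : EuclideanSpace ℝ (Fin d)) :
    modelFun a b y = modelFun aq 0 y +
      ∑ i, (v i - modelFun aq 0 (x i)) * modelFun (la i) (lb i) y := by
  set c := fun i => v i - modelFun aq 0 (x i)
  have hdata : (Mmat x)ᵀ *ᵥ aq + ∑ i, c i • Pi.single i 1 = v := by
    ext j
    have hq := mulVec_add_mulVec_apply x aq 0 j
    rw [mulVec_zero, add_zero] at hq
    simp [c, Pi.single_apply, hq]
  obtain ⟨rfl, rfl⟩ :=
    h.unique hx (hdata ▸ (isMFNSol_zero_right aq).add (IsMFNSol.sum_smul hl c))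
  rw [modelFun_add, modelFun_sum_smul]

theorem IsMFNSol.abs_modelFun_sub_le (hx : MFNPoised x)
    {la : Fin (p + 1) → Fin (d + 1) → ℝ} {lb : Fin (p + 1) → QIdx d → ℝ}
    (hl : ∀ i, IsMFNSol x (Pi.single i 1) (la i) (lb i))
    {v : Fin (p + 1) → ℝ} {a : Fin (d + 1) → ℝ} {b : QIdx d → ℝ} (h : IsMFNSol x v a b)
    (aq : Fin (d + 1) → ℝ) {C Λ : ℝ} (hres : ∀ i, |v i - modelFun aq 0 (x i)| ≤ C)
    {y : EuclideanSpace ℝ (Fin d)} (hΛ : ∀ i, |modelFun (la i) (lb i) y| ≤ Λ) :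
    |modelFun a b y - modelFun aq 0 y| ≤ (p + 1) * (C * Λ) := by
  rw [h.modelFun_eq_add_sum_lagrange hx hl aq, add_sub_cancel_left]
  calc |∑ i, (v i - modelFun aq 0 (x i)) * modelFun (la i) (lb i) y|
      ≤ ∑ _i : Fin (p + 1), C * Λ := by
        refine (abs_sum_le_sum_abs _ _).trans (sum_le_sum fun i _ => ?_)
        rw [abs_mul]
        exact mul_le_mul (hres i) (hΛ i) (abs_nonneg _) ((abs_nonneg _).trans (hres i))
    _ = (p + 1) * (C * Λ) := by simp

end MFN

lemma div_max_add_mul_max_le {ε L r Δ : ℝ} (hε : 0 ≤ ε) (hL : 0 < L) (hr : 0 < r) (hΔ : 0 < Δ) :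
    ε / max Δ √(r * ε / L) + L * max Δ √(r * ε / L) ≤
      L * √(r * ε / L) + √(L * ε / r) + L * Δ := by
  set s := √(r * ε / L)
  set t := √(L * ε / r)
  have hs : 0 ≤ s := Real.sqrt_nonneg _
  have ht : 0 ≤ t := Real.sqrt_nonneg _
  have hst : s * t = ε := by
    rw [← Real.sqrt_mul (by positivity), show r * ε / L * (L * ε / r) = ε ^ 2 by field_simp,
      Real.sqrt_sq hε]
  have hdiv : ε / max Δ s ≤ t :=
    (div_le_iff₀ (lt_max_of_lt_left hΔ)).2 (by nlinarith [le_max_right Δ s])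
  have hmax : max Δ s ≤ Δ + s := max_le (by linarith) (by linarith)
  nlinarith

theorem mfn_model_gradient_is_first_order_oracle_general
    {d p : ℕ}
    (f : EuclideanSpace ℝ (Fin d) → ℝ)
    (hf : ContDiff ℝ 1 f)
    (L : ℝ) (hL : 0 < L)
    (hlip : ∀ u v : EuclideanSpace ℝ (Fin d),
      ‖gradient f u - gradient f v‖ ≤ L * ‖u - v‖)
    (εf r Δmax Δ : ℝ)
    (hεf : 0 ≤ εf) (hr : 2 ≤ r)
    (hΔ : 0 < Δ)
    (θ : EuclideanSpace ℝ (Fin d))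
    (Δbar : ℝ) (hΔbar : Δbar = max Δ (Real.sqrt (r * εf / L)))
    (x : Fin (p + 1) → EuclideanSpace ℝ (Fin d))
    (hx : ∀ i, x i ∈ Metric.closedBall θ Δbar)
    (hpoised : MFNPoised x)
    (Λ : ℝ) (hΛ : 0 < Λ)
    (la : Fin (p + 1) → Fin (d + 1) → ℝ) (lb : Fin (p + 1) → QIdx d → ℝ)
    (hlagrange : ∀ i, IsMFNSol x (Pi.single i 1) (la i) (lb i))
    (hlampoised : ∀ i, ∀ y ∈ Metric.closedBall θ Δbar, |modelFun (la i) (lb i) y| ≤ Λ)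
    (ft : Fin (p + 1) → ℝ)
    (hft : ∀ i, |ft i - f (x i)| ≤ εf)
    (a : Fin (d + 1) → ℝ) (b : QIdx d → ℝ)
    (hmodel : IsMFNSol x ft a b)
    (A B κeg εg : ℝ)
    (hAdef : A = 4 * (p + 1) * Λ * L * Real.sqrt ((d + 1) * (d + 2)))
    (hBdef : B = 8 * (p + 1) * Λ * Real.sqrt ((d + 1) * (d + 2)))
    (hκeg : κeg = (p + 1) * Λ * (L + max A (B * εf)))
    (hεg : εg = (p + 1) * Λ *
      max ((L + A) * Real.sqrt (r * εf / L) + (B + 2) * Real.sqrt (L * εf / r))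
          (A * Δmax ^ 3 + 2 * Real.sqrt (L * εf / r))) :
    ‖gradient f θ - gradient (modelFun a b) θ‖ ≤ εg + κeg * Δ := by
  have hΔbar0 : 0 < Δbar := hΔbar ▸ lt_max_of_lt_left hΔ
  obtain ⟨aq, haq⟩ := exists_modelFun_eq_affine (f θ) (gradient f θ) θ
  have hres (i : Fin (p + 1)) : |ft i - modelFun aq 0 (x i)| ≤ εf + L * Δbar ^ 2 := by
    rw [haq]
    refine (abs_sub_taylor_le (hf.differentiable one_ne_zero) hL.le (hlip · θ) (hft i)).trans ?_
    gcongr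
    exact mem_closedBall_iff_norm.mp (hx i)
  have herr (y) (hy : y ∈ Metric.closedBall θ Δbar) :
      |modelFun a b y - (f θ + ⟪gradient f θ, y - θ⟫)| ≤ (p + 1) * ((εf + L * Δbar ^ 2) * Λ) := by
    simpa only [haq] using
      hmodel.abs_modelFun_sub_le hpoised hlagrange aq hres (hlampoised · y hy)
  have hA : 0 ≤ A := hAdef ▸ by positivity
  have hB : 0 ≤ B := hBdef ▸ by positivity
  calc ‖gradient f θ - gradient (modelFun a b) θ‖
      = ‖gradient (modelFun a b) θ - gradient f θ‖ := norm_sub_rev _ _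
    _ ≤ (p + 1) * ((εf + L * Δbar ^ 2) * Λ) / Δbar := norm_gradient_modelFun_sub_le hΔbar0 herr
    _ = (p + 1) * Λ * (εf / Δbar + L * Δbar) := by field_simp
    _ ≤ (p + 1) * Λ * (L * √(r * εf / L) + √(L * εf / r) + L * Δ) := by
      refine mul_le_mul_of_nonneg_left ?_ (by positivity)
      rw [hΔbar]
      exact div_max_add_mul_max_le hεf hL (by linarith) hΔ
    _ ≤ εg + κeg * Δ := by
      rw [hεg, hκeg, mul_assoc _ _ Δ, ← mul_add]
      refine mul_le_mul_of_nonneg_left ?_ (by positivity)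
      have := le_max_left ((L + A) * √(r * εf / L) + (B + 2) * √(L * εf / r))
        (A * Δmax ^ 3 + 2 * √(L * εf / r))
      have := le_max_left A (B * εf)
      nlinarith [Real.sqrt_nonneg (r * εf / L), Real.sqrt_nonneg (L * εf / r)]

/-- Under deterministically bounded noise of level `ε_f`, the gradient of
the minimum Frobenius norm interpolation model built on a `Λ̄`-poised set over the decoupled
sampling radius `Δ̄ = max{Δ, √(r ε_f / L)}` is a deterministic first-order oracle:
`‖∇f(θ) − g‖ ≤ ε_g + κ_eg Δ` with the stated constants. -/
theorem mfn_model_gradient_is_first_order_oracle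
    {d p : ℕ} (hd : 1 ≤ d) (hdp : d ≤ p) (hcard : p + 1 ≤ (d + 1) * (d + 2) / 2)
    (f : EuclideanSpace ℝ (Fin d) → ℝ)
    (hf : ContDiff ℝ 1 f)
    (L : ℝ) (hL : 0 < L)
    (hlip : ∀ u v : EuclideanSpace ℝ (Fin d),
      ‖gradient f u - gradient f v‖ ≤ L * ‖u - v‖)
    (εf r Δmax Δ : ℝ)
    (hεf : 0 ≤ εf) (hr : 2 ≤ r) (hLrεf : r * εf ≤ L)
    (hΔmax : 0 < Δmax) (hΔ : 0 < Δ) (hΔle : Δ ≤ Δmax)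
    (θ : EuclideanSpace ℝ (Fin d))
    (Δbar : ℝ) (hΔbar : Δbar = max Δ (Real.sqrt (r * εf / L)))
    (x : Fin (p + 1) → EuclideanSpace ℝ (Fin d))
    (hx0 : x 0 = θ)
    (hxinj : Function.Injective x)
    (hx : ∀ i, x i ∈ Metric.closedBall θ Δbar)
    (hpoised : MFNPoised x)
    (Λ : ℝ) (hΛ : 0 < Λ)
    (la : Fin (p + 1) → Fin (d + 1) → ℝ) (lb : Fin (p + 1) → QIdx d → ℝ)
    (hlagrange : ∀ i, IsMFNSol x (Pi.single i 1) (la i) (lb i))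
    (hlampoised : ∀ i, ∀ y ∈ Metric.closedBall θ Δbar, |modelFun (la i) (lb i) y| ≤ Λ)
    (ft : Fin (p + 1) → ℝ)
    (hft : ∀ i, |ft i - f (x i)| ≤ εf)
    (a : Fin (d + 1) → ℝ) (b : QIdx d → ℝ)
    (hmodel : IsMFNSol x ft a b)
    (A B κeg εg : ℝ)
    (hAdef : A = 4 * (p + 1) * Λ * L * Real.sqrt ((d + 1) * (d + 2)))
    (hBdef : B = 8 * (p + 1) * Λ * Real.sqrt ((d + 1) * (d + 2)))
    (hκeg : κeg = (p + 1) * Λ * (L + max A (B * εf)))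
    (hεg : εg = (p + 1) * Λ *
      max ((L + A) * Real.sqrt (r * εf / L) + (B + 2) * Real.sqrt (L * εf / r))
          (A * Δmax ^ 3 + 2 * Real.sqrt (L * εf / r))) :
    ‖gradient f θ - gradient (modelFun a b) θ‖ ≤ εg + κeg * Δ :=
  mfn_model_gradient_is_first_order_oracle_general f hf L hL hlip εf r Δmax Δ hεf hr hΔ θ Δbar hΔbar
    x hx hpoised Λ hΛ la lb hlagrange hlampoised ft hft a b hmodel A B κeg εg hAdef hBdef hκeg hεg
end
end
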